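/- arXiv:1501.00263 — 8 statements merged into one kernel-verified Lean document; each statement's English description precedes it below -/
import Mathlib

section
/- Let ℓ(w) = (1/N) Σ_{i=1}^N φ(y_i w^T x_i) + (γ/2)‖w‖² with γ > 0, ‖x_i‖₂ ≤ B, y_i ∈ {-1,1}, and φ: ℝ → ℝ convex and three times differentiable. If there exist Q > 0 and α ∈ [0,1) such that |φ'''(t)| ≤ Q (φ''(t))^{1-α} for all t ∈ ℝ, then ℓ is self-concordant with parameter B^{1+2α} Q / γ^{1/2+α}. -/
/-!
In a direction `u`, with `aᵢ = yᵢ⟪u, xᵢ⟫` and `tᵢ = yᵢ⟪w, xᵢ⟫`, the third derivative of the loss is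
`(1/N) Σ aᵢ³ φ'''(tᵢ)` (the regulariser is quadratic) and the second is `S + γ‖u‖²` with
`S = (1/N) Σ aᵢ² φ''(tᵢ) ≥ 0`. Splitting `|aᵢ|³ φ''^{1-α} = |aᵢ|^{1+2α} (aᵢ² φ'')^{1-α}`,
bounding `|aᵢ| ≤ B‖u‖` and applying Jensen to the concave `t ↦ t^{1-α}` gives
`|D³ℓ| ≤ Q (B‖u‖)^{1+2α} S^{1-α}`.
Since `‖u‖² ≤ D²ℓ / γ` and `S ≤ D²ℓ`, the exponents add up to `(1/2 + α) + (1 - α) = 3/2`.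
-/

open scoped RealInnerProductSpace

theorem iteratedFDeriv_comp_clm_apply_diag {F : Type*} [NormedAddCommGroup F] [NormedSpace ℝ F]
    {g : ℝ → ℝ} {n : ℕ} (hg : ContDiff ℝ n g) (L : F →L[ℝ] ℝ) (w u : F) :
    iteratedFDeriv ℝ n (fun v => g (L v)) w (fun _ => u) = L u ^ n * iteratedDeriv n g (L w) := by
  rw [show (fun v => g (L v)) = g ∘ L from rfl, L.iteratedFDeriv_comp_right hg w le_rfl,
    ContinuousMultilinearMap.compContinuousLinearMap_apply,
    iteratedFDeriv_apply_eq_iteratedDeriv_mul_prod]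
  simp [smul_eq_mul]

theorem iteratedFDeriv_const_mul_apply {F : Type*} [NormedAddCommGroup F] [NormedSpace ℝ F]
    {f : F → ℝ} {n : ℕ} (hf : ContDiff ℝ n f) (c : ℝ) (w : F) (m : Fin n → F) :
    iteratedFDeriv ℝ n (fun v => c * f v) w m = c * iteratedFDeriv ℝ n f w m :=
  congrArg (· m) (iteratedFDeriv_const_smul_apply' (a := c) hf.contDiffAt)

section InnerProductSpace

variable {E : Type*} [NormedAddCommGroup E] [InnerProductSpace ℝ E]

theorem fderiv_norm_sq_eq_coe : fderiv ℝ (fun v : E => ‖v‖ ^ 2) = ⇑(2 • innerSL ℝ (E := E)) := by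
  rw [fderiv_norm_sq, FunLike.coe_smul]

theorem iteratedFDeriv_two_norm_sq_apply_diag (w u : E) :
    iteratedFDeriv ℝ 2 (fun v : E => ‖v‖ ^ 2) w (fun _ => u) = 2 * ‖u‖ ^ 2 := by
  rw [iteratedFDeriv_two_apply, fderiv_norm_sq_eq_coe, ContinuousLinearMap.fderiv,
    smul_apply, smul_apply, innerSL_apply_apply,
    real_inner_self_eq_norm_sq, nsmul_eq_mul, Nat.cast_ofNat]

theorem iteratedFDeriv_three_norm_sq (w : E) :
    iteratedFDeriv ℝ 3 (fun v : E => ‖v‖ ^ 2) w = 0 := by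
  have hfderiv : (fun v => fderiv ℝ (fun v : E => ‖v‖ ^ 2) v) = ⇑(2 • innerSL ℝ (E := E)) :=
    fderiv_norm_sq_eq_coe
  have hconst : (fun v => fderiv ℝ ⇑(2 • innerSL ℝ (E := E)) v) = fun _ => 2 • innerSL ℝ (E := E) :=
    funext fun _ => ContinuousLinearMap.fderiv _
  rw [iteratedFDeriv_succ_eq_comp_right, Function.comp_apply, hfderiv,
    iteratedFDeriv_succ_eq_comp_right, Function.comp_apply, hconst,
    iteratedFDeriv_const_of_ne one_ne_zero, Pi.zero_apply, LinearIsometryEquiv.map_zero,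
    LinearIsometryEquiv.map_zero]

theorem iteratedFDeriv_mul_sum_comp_inner_add_mul_norm_sq_apply_diag {ι : Type*} [Fintype ι]
    {g : ℝ → ℝ} {n : ℕ} (hg : ContDiff ℝ n g) (c r : ℝ) (s : ι → ℝ) (a : ι → E) (w u : E) :
    iteratedFDeriv ℝ n (fun v => c * ∑ i, g (s i * ⟪v, a i⟫) + r * ‖v‖ ^ 2) w (fun _ => u) =
      c * ∑ i, (s i * ⟪u, a i⟫) ^ n * iteratedDeriv n g (s i * ⟪w, a i⟫) +
        r * iteratedFDeriv ℝ n (fun v : E => ‖v‖ ^ 2) w (fun _ => u) := by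
  set L : ι → E →L[ℝ] ℝ := fun i => s i • innerSL ℝ (a i)
  have hL : ∀ i v, L i v = s i * ⟪v, a i⟫ := fun i v => by simp [L, real_inner_comm]
  have hterm : ∀ i, ContDiff ℝ n fun v => g (L i v) := fun i => hg.comp (L i).contDiff
  have hdata : ContDiff ℝ n fun v => ∑ i, g (L i v) := ContDiff.sum fun i _ => hterm i
  have hnorm : ContDiff ℝ n fun v : E => ‖v‖ ^ 2 := contDiff_norm_sq ℝ
  simp only [← hL]
  rw [fun_iteratedFDeriv_add_apply (contDiff_const.mul hdata).contDiffAt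
      (contDiff_const.mul hnorm).contDiffAt,
    add_apply, iteratedFDeriv_const_mul_apply hdata, iteratedFDeriv_const_mul_apply hnorm,
    iteratedFDeriv_fun_sum_apply fun i _ => (hterm i).contDiffAt, sum_apply]
  simp only [iteratedFDeriv_comp_clm_apply_diag hg]

end InnerProductSpace

theorem abs_pow_three_mul_rpow_eq {a c : ℝ} (hc : 0 ≤ c) (α : ℝ) :
    |a| ^ 3 * c ^ (1 - α) = |a| ^ (1 + 2 * α) * (a ^ 2 * c) ^ (1 - α) := by
  have hsq : (a ^ 2) ^ (1 - α) = |a| ^ (2 * (1 - α)) := by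
    rw [← sq_abs, ← Real.rpow_natCast, ← Real.rpow_mul (abs_nonneg a), Nat.cast_ofNat]
  rw [Real.mul_rpow (sq_nonneg a) hc, hsq, ← mul_assoc,
    ← Real.rpow_add' (abs_nonneg a) (by ring_nf; norm_num),
    show 1 + 2 * α + 2 * (1 - α) = ((3 : ℕ) : ℝ) by push_cast; ring, Real.rpow_natCast]

theorem abs_sum_mul_cube_mul_le {ι : Type*} [Fintype ι] {p a c e : ι → ℝ} {K Q α : ℝ}
    (hp : ∀ i, 0 ≤ p i) (hp1 : ∑ i, p i = 1) (hQ : 0 ≤ Q) (hK : 0 ≤ K) (hα0 : 0 ≤ α)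
    (hα1 : α ≤ 1) (hc : ∀ i, 0 ≤ c i) (ha : ∀ i, |a i| ≤ K) (he : ∀ i, |e i| ≤ Q * c i ^ (1 - α)) :
    |∑ i, p i * (a i ^ 3 * e i)| ≤
      Q * K ^ (1 + 2 * α) * (∑ i, p i * (a i ^ 2 * c i)) ^ (1 - α) := by
  have hpoint : ∀ i, |a i ^ 3 * e i| ≤ Q * K ^ (1 + 2 * α) * (a i ^ 2 * c i) ^ (1 - α) := by
    intro i
    calc |a i ^ 3 * e i| = |a i| ^ 3 * |e i| := by rw [abs_mul, abs_pow]
      _ ≤ |a i| ^ 3 * (Q * c i ^ (1 - α)) := by gcongr; exact he i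
      _ = Q * (|a i| ^ (1 + 2 * α) * (a i ^ 2 * c i) ^ (1 - α)) := by
        rw [← abs_pow_three_mul_rpow_eq (hc i)]; ring
      _ ≤ Q * (K ^ (1 + 2 * α) * (a i ^ 2 * c i) ^ (1 - α)) := by
        gcongr
        · exact Real.rpow_nonneg (mul_nonneg (sq_nonneg _) (hc i)) _
        · exact ha i
      _ = _ := by ring
  have hjensen : ∑ i, p i * (a i ^ 2 * c i) ^ (1 - α) ≤ (∑ i, p i * (a i ^ 2 * c i)) ^ (1 - α) :=
    (Real.concaveOn_rpow (by linarith) (by linarith)).le_map_sum (fun i _ => hp i) hp1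
      fun i _ => Set.mem_Ici.2 (mul_nonneg (sq_nonneg _) (hc i))
  calc |∑ i, p i * (a i ^ 3 * e i)| ≤ ∑ i, p i * |a i ^ 3 * e i| := by
        refine (Finset.abs_sum_le_sum_abs _ _).trans_eq (Finset.sum_congr rfl fun i _ => ?_)
        rw [abs_mul, abs_of_nonneg (hp i)]
    _ ≤ ∑ i, p i * (Q * K ^ (1 + 2 * α) * (a i ^ 2 * c i) ^ (1 - α)) := by
        gcongr with i; exacts [hp i, hpoint i]
    _ = Q * K ^ (1 + 2 * α) * ∑ i, p i * (a i ^ 2 * c i) ^ (1 - α) := by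
        rw [Finset.mul_sum]; exact Finset.sum_congr rfl fun i _ => by ring
    _ ≤ _ := by gcongr

theorem rpow_mul_rpow_le_div_rpow {U S T γ α : ℝ} (hU : 0 ≤ U) (hS : 0 ≤ S) (hγ : 0 < γ)
    (hα0 : 0 ≤ α) (hα1 : α ≤ 1) (hUT : γ * U ^ 2 ≤ T) (hST : S ≤ T) :
    U ^ (1 + 2 * α) * S ^ (1 - α) ≤ T ^ ((3 : ℝ) / 2) / γ ^ ((1 : ℝ) / 2 + α) := by
  have hT : 0 ≤ T := hS.trans hST
  have hU2 : U ^ 2 ≤ T / γ := by rw [le_div_iff₀ hγ]; linarith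
  calc U ^ (1 + 2 * α) * S ^ (1 - α) = (U ^ 2) ^ ((1 : ℝ) / 2 + α) * S ^ (1 - α) := by
        rw [← Real.rpow_natCast, ← Real.rpow_mul hU]; ring_nf
    _ ≤ (T / γ) ^ ((1 : ℝ) / 2 + α) * T ^ (1 - α) := by gcongr
    _ = T ^ ((3 : ℝ) / 2) / γ ^ ((1 : ℝ) / 2 + α) := by
        rw [Real.div_rpow hT hγ.le, div_mul_eq_mul_div,
          ← Real.rpow_add' hT (by linarith)]
        ring_nf

theorem abs_sum_mul_cube_mul_le_rpow_three_halves {ι : Type*} [Fintype ι] {p a c e : ι → ℝ}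
    {B U γ Q α : ℝ} (hp : ∀ i, 0 ≤ p i) (hp1 : ∑ i, p i = 1) (hQ : 0 ≤ Q) (hB : 0 ≤ B)
    (hU : 0 ≤ U) (hγ : 0 < γ) (hα0 : 0 ≤ α) (hα1 : α ≤ 1) (hc : ∀ i, 0 ≤ c i)
    (ha : ∀ i, |a i| ≤ B * U) (he : ∀ i, |e i| ≤ Q * c i ^ (1 - α)) :
    |∑ i, p i * (a i ^ 3 * e i)| ≤ B ^ (1 + 2 * α) * Q / γ ^ ((1 : ℝ) / 2 + α) *
      (∑ i, p i * (a i ^ 2 * c i) + γ * U ^ 2) ^ ((3 : ℝ) / 2) := by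
  set S := ∑ i, p i * (a i ^ 2 * c i)
  have hS : 0 ≤ S :=
    Finset.sum_nonneg fun i _ => mul_nonneg (hp i) (mul_nonneg (sq_nonneg _) (hc i))
  calc |∑ i, p i * (a i ^ 3 * e i)| ≤ Q * (B * U) ^ (1 + 2 * α) * S ^ (1 - α) :=
        abs_sum_mul_cube_mul_le hp hp1 hQ (mul_nonneg hB hU) hα0 hα1 hc ha he
    _ = B ^ (1 + 2 * α) * Q * (U ^ (1 + 2 * α) * S ^ (1 - α)) := by
        rw [Real.mul_rpow hB hU]; ring
    _ ≤ B ^ (1 + 2 * α) * Q * ((S + γ * U ^ 2) ^ ((3 : ℝ) / 2) / γ ^ ((1 : ℝ) / 2 + α)) := by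
        gcongr
        exact rpow_mul_rpow_le_div_rpow hU hS hγ hα0 hα1 (le_add_of_nonneg_left hS)
          (le_add_of_nonneg_right (by positivity))
    _ = _ := by ring

/-- If `|φ'''(t)| ≤ Q (φ''(t))^{1-α}` for all `t`, with `Q > 0`, `α ∈ [0,1)`,
`γ > 0`, `‖x_i‖ ≤ B`, `y_i ∈ {±1}`, then the regularized empirical loss
`ℓ(w) = (1/N) Σ φ(y_i ⟨w, x_i⟩) + (γ/2)‖w‖²` is self-concordant with
parameter `B^{1+2α} Q / γ^{1/2+α}`. -/
theorem regularized_loss_self_concordant {d N : ℕ} (hN : 0 < N)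
    (x : Fin N → EuclideanSpace ℝ (Fin d)) (y : Fin N → ℝ) (B γ Q α : ℝ)
    (hy : ∀ i, y i = 1 ∨ y i = -1) (hB : ∀ i, ‖x i‖ ≤ B)
    (hγ : 0 < γ) (hQ : 0 < Q) (hα : α ∈ Set.Ico (0:ℝ) 1)
    (φ : ℝ → ℝ) (hφ : ContDiff ℝ 3 φ) (hφconv : ConvexOn ℝ Set.univ φ)
    (hφ3 : ∀ t : ℝ, |deriv (deriv (deriv φ)) t| ≤ Q * (deriv (deriv φ) t) ^ (1 - α)) :
    ∀ w u : EuclideanSpace ℝ (Fin d),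
      |iteratedFDeriv ℝ 3
          (fun v => (1 / (N:ℝ)) * ∑ i, φ (y i * ⟪v, x i⟫) + (γ / 2) * ‖v‖ ^ 2)
          w (fun _ => u)|
        ≤ (B ^ (1 + 2 * α) * Q / γ ^ ((1:ℝ)/2 + α)) *
          (iteratedFDeriv ℝ 2
            (fun v => (1 / (N:ℝ)) * ∑ i, φ (y i * ⟪v, x i⟫) + (γ / 2) * ‖v‖ ^ 2)
            w (fun _ => u)) ^ ((3:ℝ)/2) := by
  obtain ⟨hα0, hα1⟩ := hα
  have hB0 : 0 ≤ B := (norm_nonneg _).trans (hB ⟨0, hN⟩)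
  have hφ'' : ∀ t, 0 ≤ iteratedDeriv 2 φ t := fun t => by
    rw [iteratedDeriv_eq_iterate]
    exact (monotoneOn_univ.mp (hφconv.monotoneOn_deriv fun t _ =>
      (hφ.differentiable (by norm_num)).differentiableAt)).deriv_nonneg
  have hφ''' : ∀ t, |iteratedDeriv 3 φ t| ≤ Q * iteratedDeriv 2 φ t ^ (1 - α) := by
    simpa only [iteratedDeriv_eq_iterate, Function.iterate_succ_apply',
      Function.iterate_zero_apply] using hφ3
  intro w u
  have hinner : ∀ i, |y i * ⟪u, x i⟫| ≤ B * ‖u‖ := fun i => by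
    rcases hy i with h | h <;>
      simpa [h, abs_mul, mul_comm B] using (abs_real_inner_le_norm u (x i)).trans
        (mul_le_mul_of_nonneg_left (hB i) (norm_nonneg u))
  have hreg : γ / 2 * (2 * ‖u‖ ^ 2) = γ * ‖u‖ ^ 2 := by ring
  rw [iteratedFDeriv_mul_sum_comp_inner_add_mul_norm_sq_apply_diag hφ,
    iteratedFDeriv_mul_sum_comp_inner_add_mul_norm_sq_apply_diag (hφ.of_le (by norm_num)),
    iteratedFDeriv_three_norm_sq, iteratedFDeriv_two_norm_sq_apply_diag, hreg,
    zero_apply, mul_zero, add_zero, Finset.mul_sum, Finset.mul_sum]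
  have hNpos : (0 : ℝ) < N := by exact_mod_cast hN
  exact abs_sum_mul_cube_mul_le_rpow_three_halves (fun _ => by positivity)
    (by simp [Finset.card_univ, hNpos.ne']) hQ.le hB0 (norm_nonneg u) hγ hα0 hα1.le
    (fun i => hφ'' _) hinner (fun i => hφ''' _)
end

section
/- For p ≥ 3, the smoothed hinge loss φ_p defined piecewise (φ_p(t) = 3/2 - (p-2)/(p-1) - t for t < -(p-3)/(p-1); φ_p(t) = 3/2 - (p-2)/(p-1) - t + (t + (p-3)/(p-1))^p/(p(p-1)) for -(p-3)/(p-1) ≤ t < 1 - (p-3)/(p-1); φ_p(t) = (p+1)/(p(p-1)) - t/(p-1) + (1-t)²/2 for 1 - (p-3)/(p-1) ≤ t < 1; φ_p(t) = (2-t)^p/(p(p-1)) for 1 ≤ t < 2; φ_p(t) = 0 for t ≥ 2) satisfies |φ_p'''(t)| ≤ (p-2)(φ_p''(t))^{1 - 1/(p-2)} for all t where the third derivative exists. -/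
noncomputable def smoothedHinge (p : ℝ) (t : ℝ) : ℝ :=
  if t < -(p - 3) / (p - 1) then 3/2 - (p - 2)/(p - 1) - t
  else if t < 1 - (p - 3)/(p - 1) then
    3/2 - (p - 2)/(p - 1) - t + (t + (p - 3)/(p - 1)) ^ p / (p * (p - 1))
  else if t < 1 then (p + 1)/(p * (p - 1)) - t/(p - 1) + (1 - t) ^ 2 / 2
  else if t < 2 then (2 - t) ^ p / (p * (p - 1))
  else 0

/-
Both derivatives are glued from pieces that are differentiable on all of `ℝ` (powers
`(t + c) ^ q` and `(c - t) ^ q` with `q ≥ 1`) and that match in value and slope at each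
break point, so `φ'` and `φ''` are computed piece by piece. Since `0 ≤ φ'' ≤ 1`, wherever
`φ''` equals `0` or `1` (the flat pieces and all break points) it is extremal and
`φ''' = 0`. On the two remaining open pieces `φ'' = u ^ (p - 2)` with
`u = t + (p - 3)/(p - 1)` or `u = 2 - t`, and there `|φ'''| = (p - 2) u ^ (p - 3)`,
which is exactly `(p - 2) (φ'') ^ (1 - 1/(p - 2))`.
-/

open Set Filter Topology

-- `x` is bound after the colon so that nested applications unify: against a goal of the
-- same shape, `f' x` with `x` a fresh bound variable is a higher-order pattern.
theorem hasDerivAt_ite_lt {f g f' g' : ℝ → ℝ} {c : ℝ} (hf : ∀ x, HasDerivAt f (f' x) x)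
    (hg : ∀ x, HasDerivAt g (g' x) x) (hc : f c = g c) (hc' : f' c = g' c) :
    ∀ x, HasDerivAt (fun t => if t < c then f t else g t) (if x < c then f' x else g' x) x := by
  intro x
  rcases lt_trichotomy x c with hx | rfl | hx
  · rw [if_pos hx]
    exact (hf x).congr_of_eventuallyEq <|
      eventually_of_mem (Iio_mem_nhds hx) fun t ht => if_pos ht
  · rw [if_neg (lt_irrefl x)]
    have hleft : HasDerivWithinAt (fun t => if t < x then f t else g t) (g' x) (Iic x) x := by
      rw [← hc']
      refine (hf x).hasDerivWithinAt.congr (fun t ht => ?_) (by simp [hc])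
      rcases (mem_Iic.1 ht).lt_or_eq with h | rfl
      · exact if_pos h
      · simp [hc]
    have hright : HasDerivWithinAt (fun t => if t < x then f t else g t) (g' x) (Ici x) x :=
      (hg x).hasDerivWithinAt.congr (fun t ht => if_neg (not_lt.2 ht)) (if_neg (lt_irrefl x))
    simpa using hleft.union hright
  · rw [if_neg (not_lt.2 hx.le)]
    exact (hg x).congr_of_eventuallyEq <|
      eventually_of_mem (Ioi_mem_nhds hx) fun t ht => if_neg (not_lt.2 ht.le)

theorem hasDerivAt_add_const_rpow {q : ℝ} (hq : 1 ≤ q) (c x : ℝ) :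
    HasDerivAt (fun t => (t + c) ^ q) (q * (x + c) ^ (q - 1)) x := by
  simpa using ((hasDerivAt_id x).add_const c).rpow_const (Or.inr hq)

theorem hasDerivAt_const_sub_rpow {q : ℝ} (hq : 1 ≤ q) (c x : ℝ) :
    HasDerivAt (fun t => (c - t) ^ q) (-(q * (c - x) ^ (q - 1))) x := by
  simpa using ((hasDerivAt_id x).const_sub c).rpow_const (Or.inr hq)

theorem rpow_rpow_one_sub_one_div {u : ℝ} (hu : 0 ≤ u) {q : ℝ} (hq : q ≠ 0) :
    (u ^ q) ^ (1 - 1 / q) = u ^ (q - 1) := by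
  rw [← Real.rpow_mul hu]
  congr 1
  field_simp

theorem one_sub_div_lt_one_or_eq {p : ℝ} (hp : 3 ≤ p) : 1 - (p - 3) / (p - 1) < 1 ∨ p = 3 := by
  rcases hp.lt_or_eq with hp | rfl
  · left
    have : 0 < (p - 3) / (p - 1) := div_pos (by linarith) (by linarith)
    linarith
  · exact Or.inr rfl

theorem neg_div_lt_one_sub_div (p : ℝ) : -(p - 3) / (p - 1) < 1 - (p - 3) / (p - 1) := by
  rw [neg_div]
  linarith

noncomputable def smoothedHingeDeriv (p t : ℝ) : ℝ :=
  if t < -(p - 3) / (p - 1) then -1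
  else if t < 1 - (p - 3)/(p - 1) then -1 + (t + (p - 3)/(p - 1)) ^ (p - 1) / (p - 1)
  else if t < 1 then t - 1 - 1/(p - 1)
  else if t < 2 then -((2 - t) ^ (p - 1) / (p - 1))
  else 0

noncomputable def smoothedHingeDeriv2 (p t : ℝ) : ℝ :=
  if t < -(p - 3) / (p - 1) then 0
  else if t < 1 - (p - 3)/(p - 1) then (t + (p - 3)/(p - 1)) ^ (p - 2)
  else if t < 1 then 1
  else if t < 2 then (2 - t) ^ (p - 2)
  else 0

theorem hasDerivAt_smoothedHinge {p : ℝ} (hp : 3 ≤ p) :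
    ∀ x, HasDerivAt (smoothedHinge p) (smoothedHingeDeriv p x) x := by
  have hp0 : p ≠ 0 := by positivity
  have hp1 : p - 1 ≠ 0 := by linarith
  unfold smoothedHinge smoothedHingeDeriv
  refine hasDerivAt_ite_lt (fun y => ?_) (hasDerivAt_ite_lt (fun y => ?_)
    (hasDerivAt_ite_lt (fun y => ?_) (hasDerivAt_ite_lt (fun y => ?_)
      (fun y => hasDerivAt_const y 0) ?_ ?_) ?_ ?_) ?_ ?_) ?_ ?_
  · simpa using (hasDerivAt_id y).const_sub (3/2 - (p - 2)/(p - 1))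
  · refine (((hasDerivAt_id' y).const_sub _).add ((hasDerivAt_add_const_rpow (by linarith)
      ((p - 3)/(p - 1)) y).div_const (p * (p - 1)))).congr_deriv ?_
    field_simp
  · refine ((((hasDerivAt_id' y).div_const (p - 1)).const_sub _).add
      ((((hasDerivAt_id' y).const_sub 1).pow 2).div_const 2)).congr_deriv ?_
    field_simp
    ring
  · refine ((hasDerivAt_const_sub_rpow (by linarith) 2 y).div_const (p * (p - 1))).congr_deriv ?_
    field_simp
  · simp [Real.zero_rpow hp0]
  · simp [Real.zero_rpow hp1]
  · norm_num
    field_simp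
    ring
  · norm_num
  · rcases one_sub_div_lt_one_or_eq hp with hB | rfl
    · rw [if_pos hB, sub_add_cancel, Real.one_rpow]
      field_simp
      ring
    · norm_num
  · rcases one_sub_div_lt_one_or_eq hp with hB | rfl
    · rw [if_pos hB, sub_add_cancel, Real.one_rpow]
      field_simp
      ring
    · norm_num
  · rw [if_pos (neg_div_lt_one_sub_div p), neg_div, neg_add_cancel, Real.zero_rpow hp0]
    ring
  · rw [if_pos (neg_div_lt_one_sub_div p), neg_div, neg_add_cancel, Real.zero_rpow hp1]
    ring

theorem hasDerivAt_smoothedHingeDeriv {p : ℝ} (hp : 3 ≤ p) :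
    ∀ x, HasDerivAt (smoothedHingeDeriv p) (smoothedHingeDeriv2 p x) x := by
  have hp1 : p - 1 ≠ 0 := by linarith
  have hp2 : p - 2 ≠ 0 := by linarith
  unfold smoothedHingeDeriv smoothedHingeDeriv2
  refine hasDerivAt_ite_lt (fun y => hasDerivAt_const y (-1)) (hasDerivAt_ite_lt (fun y => ?_)
    (hasDerivAt_ite_lt (fun y => ?_) (hasDerivAt_ite_lt (fun y => ?_)
      (fun y => hasDerivAt_const y 0) ?_ ?_) ?_ ?_) ?_ ?_) ?_ ?_
  · refine (((hasDerivAt_add_const_rpow (by linarith) ((p - 3)/(p - 1)) y).div_const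
      (p - 1)).const_add (-1)).congr_deriv ?_
    rw [show p - 1 - 1 = p - 2 by ring]
    field_simp
  · simpa using ((hasDerivAt_id y).sub_const 1).sub_const (1/(p - 1))
  · refine ((hasDerivAt_const_sub_rpow (by linarith) 2 y).div_const (p - 1)).neg.congr_deriv ?_
    rw [show p - 1 - 1 = p - 2 by ring]
    field_simp
  · simp [Real.zero_rpow hp1]
  · simp [Real.zero_rpow hp2]
  · norm_num
  · norm_num
  · rcases one_sub_div_lt_one_or_eq hp with hB | rfl
    · rw [if_pos hB, sub_add_cancel, Real.one_rpow]
      field_simp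
      ring
    · norm_num
  · rcases one_sub_div_lt_one_or_eq hp with hB | rfl
    · rw [if_pos hB, sub_add_cancel, Real.one_rpow]
    · norm_num
  · rw [if_pos (neg_div_lt_one_sub_div p), neg_div, neg_add_cancel, Real.zero_rpow hp1]
    ring
  · rw [if_pos (neg_div_lt_one_sub_div p), neg_div, neg_add_cancel, Real.zero_rpow hp2]

theorem deriv_deriv_smoothedHinge {p : ℝ} (hp : 3 ≤ p) :
    deriv (deriv (smoothedHinge p)) = smoothedHingeDeriv2 p := by
  have h : deriv (smoothedHinge p) = smoothedHingeDeriv p :=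
    funext fun x => (hasDerivAt_smoothedHinge hp x).deriv
  exact h ▸ funext fun x => (hasDerivAt_smoothedHingeDeriv hp x).deriv

theorem smoothedHingeDeriv2_nonneg (p t : ℝ) : 0 ≤ smoothedHingeDeriv2 p t := by
  unfold smoothedHingeDeriv2
  split_ifs with h1 h2 h3 h4
  · exact le_rfl
  · rw [not_lt, neg_div] at h1
    exact Real.rpow_nonneg (by linarith) _
  · exact zero_le_one
  · exact Real.rpow_nonneg (by linarith) _
  · exact le_rfl

theorem smoothedHingeDeriv2_le_one {p : ℝ} (hp : 2 ≤ p) (t : ℝ) : smoothedHingeDeriv2 p t ≤ 1 := by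
  unfold smoothedHingeDeriv2
  split_ifs with h1 h2 h3 h4
  · exact zero_le_one
  · rw [not_lt, neg_div] at h1
    exact Real.rpow_le_one (by linarith) (by linarith) (by linarith)
  · exact le_rfl
  · exact Real.rpow_le_one (by linarith) (by linarith) (by linarith)
  · exact zero_le_one

theorem deriv_smoothedHingeDeriv2_eq_zero {p t : ℝ} (hp : 2 ≤ p)
    (ht : smoothedHingeDeriv2 p t = 0 ∨ smoothedHingeDeriv2 p t = 1) :
    deriv (smoothedHingeDeriv2 p) t = 0 := by
  rcases ht with h | h
  · refine IsLocalMin.deriv_eq_zero (Eventually.of_forall fun s => ?_)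
    rw [h]
    exact smoothedHingeDeriv2_nonneg p s
  · refine IsLocalMax.deriv_eq_zero (Eventually.of_forall fun s => ?_)
    rw [h]
    exact smoothedHingeDeriv2_le_one hp s

theorem smoothedHingeDeriv2_cases {p : ℝ} (hp : 3 ≤ p) (t : ℝ) :
    (smoothedHingeDeriv2 p t = 0 ∨ smoothedHingeDeriv2 p t = 1) ∨
      t ∈ Ioo (-(p - 3) / (p - 1)) (1 - (p - 3) / (p - 1)) ∨ t ∈ Ioo 1 2 := by
  unfold smoothedHingeDeriv2
  split_ifs with h1 h2 h3 h4
  · exact Or.inl (Or.inl rfl)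
  · rcases (not_lt.1 h1).lt_or_eq with hA | hA
    · exact Or.inr (Or.inl ⟨hA, h2⟩)
    · refine Or.inl (Or.inl ?_)
      rw [← hA, neg_div, neg_add_cancel, Real.zero_rpow (by linarith)]
  · exact Or.inl (Or.inr rfl)
  · rcases (not_lt.1 h3).lt_or_eq with h1t | rfl
    · exact Or.inr (Or.inr ⟨h1t, h4⟩)
    · refine Or.inl (Or.inr ?_)
      norm_num
  · exact Or.inl (Or.inl rfl)

theorem abs_deriv_smoothedHingeDeriv2_of_mem_Ioo_left {p t : ℝ} (hp : 3 ≤ p)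
    (ht : t ∈ Ioo (-(p - 3) / (p - 1)) (1 - (p - 3) / (p - 1))) :
    |deriv (smoothedHingeDeriv2 p) t| = (p - 2) * smoothedHingeDeriv2 p t ^ (1 - 1 / (p - 2)) := by
  have hpos : 0 < t + (p - 3) / (p - 1) := by
    have := ht.1
    rw [neg_div] at this
    linarith
  have he : smoothedHingeDeriv2 p =ᶠ[𝓝 t] fun s => (s + (p - 3) / (p - 1)) ^ (p - 2) :=
    eventually_of_mem (Ioo_mem_nhds ht.1 ht.2) fun s hs => by
      rw [smoothedHingeDeriv2, if_neg (not_lt.2 hs.1.le), if_pos hs.2]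
  rw [he.deriv_eq, (hasDerivAt_add_const_rpow (by linarith) _ t).deriv, he.eq_of_nhds,
    rpow_rpow_one_sub_one_div hpos.le (by linarith), abs_of_nonneg]
  exact mul_nonneg (by linarith) (Real.rpow_nonneg hpos.le _)

theorem abs_deriv_smoothedHingeDeriv2_of_mem_Ioo_right {p t : ℝ} (hp : 3 ≤ p)
    (ht : t ∈ Ioo 1 2) :
    |deriv (smoothedHingeDeriv2 p) t| = (p - 2) * smoothedHingeDeriv2 p t ^ (1 - 1 / (p - 2)) := by
  have hpos : 0 < 2 - t := by linarith [ht.2]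
  have he : smoothedHingeDeriv2 p =ᶠ[𝓝 t] fun s => (2 - s) ^ (p - 2) :=
    eventually_of_mem (Ioo_mem_nhds ht.1 ht.2) fun s hs => by
      have hB : 1 - (p - 3) / (p - 1) ≤ s := by
        have : 0 ≤ (p - 3) / (p - 1) := div_nonneg (by linarith) (by linarith)
        linarith [hs.1]
      rw [smoothedHingeDeriv2, if_neg (not_lt.2 ((neg_div_lt_one_sub_div p).le.trans hB)),
        if_neg (not_lt.2 hB), if_neg (not_lt.2 hs.1.le), if_pos hs.2]
  rw [he.deriv_eq, (hasDerivAt_const_sub_rpow (by linarith) _ t).deriv, he.eq_of_nhds,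
    rpow_rpow_one_sub_one_div hpos.le (by linarith), abs_neg, abs_of_nonneg]
  exact mul_nonneg (by linarith) (Real.rpow_nonneg hpos.le _)

/-- For `p ≥ 3`, the smoothed hinge loss satisfies
`|φ_p'''(t)| ≤ (p-2) (φ_p''(t))^{1 - 1/(p-2)}` wherever the third derivative
exists. -/
theorem smoothedHinge_third_deriv_bound (p : ℝ) (hp : 3 ≤ p) :
    ∀ t : ℝ, DifferentiableAt ℝ (deriv (deriv (smoothedHinge p))) t →
      |deriv (deriv (deriv (smoothedHinge p))) t|
        ≤ (p - 2) * (deriv (deriv (smoothedHinge p)) t) ^ (1 - 1/(p - 2)) := by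
  intro t _
  rw [deriv_deriv_smoothedHinge hp]
  rcases smoothedHingeDeriv2_cases hp t with hext | ht | ht
  · rw [deriv_smoothedHingeDeriv2_eq_zero (by linarith) hext, abs_zero]
    exact mul_nonneg (by linarith) (Real.rpow_nonneg (smoothedHingeDeriv2_nonneg p t) _)
  · exact (abs_deriv_smoothedHingeDeriv2_of_mem_Ioo_left hp ht).le
  · exact (abs_deriv_smoothedHingeDeriv2_of_mem_Ioo_right hp ht).le
end

section
/- Let H and H₁ be symmetric positive definite d×d matrices with λI ⪯ H ⪯ LI for some L ≥ λ > 0. If ‖H₁ - H‖₂ ≤ μ for some μ > 0 and P = H₁ + μI, then all eigenvalues of P^{-1}H are real and positive, the largest eigenvalue satisfies σ_max(P^{-1}H) ≤ 1, and the smallest eigenvalue satisfies σ_min(P^{-1}H) ≥ λ/(λ + 2μ). -/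
/-!
If `(P⁻¹H) v = z v` with `v ≠ 0`, then `v* H v = z · v* P v` and `v* P v > 0`, so a Loewner
sandwich `c P ≤ H ≤ c' P` forces `z` to be real with `c ≤ z ≤ c'`. The bound `‖H₁ - H‖₂ ≤ μ`
gives `-μ I ≤ H₁ - H ≤ μ I`, hence `H ≤ P` and
`λ P ≤ λ H + 2μλ I ≤ (λ + 2μ) H`, using `λ I ≤ H` for the second step.
-/

open Matrix
open scoped ComplexOrder MatrixOrder

namespace Matrix

variable {n : Type*}

theorem map_ofReal_smul (c : ℝ) (A : Matrix n n ℝ) :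
    (c • A).map Complex.ofReal = (c : ℂ) • A.map Complex.ofReal := by
  ext; simp

variable [Fintype n]

theorem PosSemidef.map_ofReal {A : Matrix n n ℝ} (hA : A.PosSemidef) :
    (A.map Complex.ofReal).PosSemidef := by
  obtain ⟨m, w, rfl⟩ := posSemidef_iff_eq_sum_vecMulVec.mp hA
  refine posSemidef_iff_eq_sum_vecMulVec.mpr ⟨m, fun i j => w i j, ?_⟩
  ext j k
  simp [sum_apply, vecMulVec_apply]

theorem map_ofReal_le_map_ofReal {A B : Matrix n n ℝ} (h : A ≤ B) :
    A.map Complex.ofReal ≤ B.map Complex.ofReal := by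
  simpa only [le_iff, ← Matrix.map_sub _ Complex.ofReal_sub] using h.map_ofReal

variable [DecidableEq n]

theorem PosDef.map_ofReal {A : Matrix n n ℝ} (hA : A.PosDef) :
    (A.map Complex.ofReal).PosDef := by
  refine hA.posSemidef.map_ofReal.posDef_iff_det_ne_zero.mpr ?_
  rw [show A.map Complex.ofReal = Complex.ofRealHom.mapMatrix A from rfl, ← RingHom.map_det]
  exact Complex.ofReal_ne_zero.mpr hA.det_pos.ne'

theorem abs_dotProduct_mulVec_le_norm_toEuclideanCLM_mul (A : Matrix n n ℝ) (x : n → ℝ) :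
    |x ⬝ᵥ A *ᵥ x| ≤ ‖toEuclideanCLM (𝕜 := ℝ) A‖ * (x ⬝ᵥ x) := by
  set v : EuclideanSpace ℝ n := WithLp.toLp 2 x
  have hnorm : x ⬝ᵥ x = ‖v‖ * ‖v‖ := by
    rw [← real_inner_self_eq_norm_mul_norm, EuclideanSpace.inner_toLp_toLp, star_trivial]
  calc |x ⬝ᵥ A *ᵥ x| = |inner ℝ v (toEuclideanCLM (𝕜 := ℝ) A v)| := by
        rw [inner_toEuclideanCLM]
    _ ≤ ‖v‖ * ‖toEuclideanCLM (𝕜 := ℝ) A v‖ := abs_real_inner_le_norm _ _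
    _ ≤ ‖v‖ * (‖toEuclideanCLM (𝕜 := ℝ) A‖ * ‖v‖) := by
        gcongr; exact ContinuousLinearMap.le_opNorm _ _
    _ = ‖toEuclideanCLM (𝕜 := ℝ) A‖ * (x ⬝ᵥ x) := by rw [hnorm]; ring

theorem neg_smul_one_le_of_norm_toEuclideanCLM_le {A : Matrix n n ℝ} (hA : A.IsHermitian)
    {μ : ℝ} (h : ‖toEuclideanCLM (𝕜 := ℝ) A‖ ≤ μ) : -(μ • 1) ≤ A := by
  rw [le_iff, sub_neg_eq_add]
  refine .of_dotProduct_mulVec_nonneg (hA.add (isHermitian_one.smul (.all μ))) fun x => ?_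
  have hx := abs_le.mp (abs_dotProduct_mulVec_le_norm_toEuclideanCLM_mul A x)
  have hxx : 0 ≤ x ⬝ᵥ x := by simpa using dotProduct_star_self_nonneg x
  simp only [star_trivial, add_mulVec, smul_mulVec, one_mulVec, dotProduct_add, dotProduct_smul,
    smul_eq_mul]
  nlinarith

theorem le_smul_one_of_norm_toEuclideanCLM_le {A : Matrix n n ℝ} (hA : A.IsHermitian)
    {μ : ℝ} (h : ‖toEuclideanCLM (𝕜 := ℝ) A‖ ≤ μ) : A ≤ μ • 1 := by
  rw [← neg_le_neg_iff]
  exact neg_smul_one_le_of_norm_toEuclideanCLM_le hA.neg (by rwa [map_neg, norm_neg])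

section GeneralizedEigenvalue

variable {P H M : Matrix n n ℂ} {z c : ℂ}

theorem exists_dotProduct_mulVec_eq_mul_of_mem_spectrum (hP : P.PosDef) (hPM : P * M = H)
    (hz : z ∈ spectrum ℂ M) :
    ∃ v : n → ℂ, 0 < star v ⬝ᵥ P *ᵥ v ∧ star v ⬝ᵥ H *ᵥ v = z * (star v ⬝ᵥ P *ᵥ v) := by
  rw [← spectrum_toLin', ← Module.End.hasEigenvalue_iff_mem_spectrum] at hz
  obtain ⟨v, hv, hv0⟩ := hz.exists_hasEigenvector
  have hMv : M *ᵥ v = z • v := by simpa using Module.End.mem_eigenspace_iff.mp hv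
  refine ⟨v, hP.dotProduct_mulVec_pos hv0, ?_⟩
  rw [← hPM, ← mulVec_mulVec, hMv, mulVec_smul, dotProduct_smul, smul_eq_mul]

theorem le_of_mem_spectrum_of_smul_le (hP : P.PosDef) (hPM : P * M = H)
    (hz : z ∈ spectrum ℂ M) (h : c • P ≤ H) : c ≤ z := by
  obtain ⟨v, hb, hv⟩ := exists_dotProduct_mulVec_eq_mul_of_mem_spectrum hP hPM hz
  have hform := (le_iff.mp h).dotProduct_mulVec_nonneg v
  rw [sub_mulVec, dotProduct_sub, smul_mulVec, dotProduct_smul, hv, smul_eq_mul, ← sub_mul]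
    at hform
  simpa [sub_nonneg, hb.ne'] using mul_nonneg hform (inv_pos.mpr hb).le

theorem le_of_mem_spectrum_of_le_smul (hP : P.PosDef) (hPM : P * M = H)
    (hz : z ∈ spectrum ℂ M) (h : H ≤ c • P) : z ≤ c := by
  obtain ⟨v, hb, hv⟩ := exists_dotProduct_mulVec_eq_mul_of_mem_spectrum hP hPM hz
  have hform := (le_iff.mp h).dotProduct_mulVec_nonneg v
  rw [sub_mulVec, dotProduct_sub, smul_mulVec, dotProduct_smul, hv, smul_eq_mul, ← sub_mul]
    at hform
  simpa [sub_nonneg, hb.ne'] using mul_nonneg hform (inv_pos.mpr hb).le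

end GeneralizedEigenvalue

theorem im_eq_zero_and_mem_Icc_of_mem_spectrum_inv_mul {P H : Matrix n n ℝ} {c c' : ℝ}
    (hP : P.PosDef) (hlo : c • P ≤ H) (hhi : H ≤ c' • P) {z : ℂ}
    (hz : z ∈ spectrum ℂ ((P⁻¹ * H).map Complex.ofReal)) :
    z.im = 0 ∧ z.re ∈ Set.Icc c c' := by
  have hPM : P.map Complex.ofReal * ((P⁻¹ * H).map Complex.ofReal) = H.map Complex.ofReal := by
    change Complex.ofRealHom.mapMatrix P * Complex.ofRealHom.mapMatrix (P⁻¹ * H) =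
      Complex.ofRealHom.mapMatrix H
    rw [← map_mul, mul_nonsing_inv_cancel_left _ _ ((isUnit_iff_isUnit_det _).mp hP.isUnit)]
  have hcz := le_of_mem_spectrum_of_smul_le hP.map_ofReal hPM hz
    (by simpa only [map_ofReal_smul] using map_ofReal_le_map_ofReal hlo)
  have hzc := le_of_mem_spectrum_of_le_smul hP.map_ofReal hPM hz
    (by simpa only [map_ofReal_smul] using map_ofReal_le_map_ofReal hhi)
  obtain ⟨hcz, him⟩ := Complex.le_def.mp hcz
  obtain ⟨hzc, -⟩ := Complex.le_def.mp hzc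
  simp only [Complex.ofReal_re, Complex.ofReal_im] at hcz hzc him
  exact ⟨him.symm, hcz, hzc⟩

end Matrix

theorem preconditioned_eigenvalue_bounds_general {d : ℕ} (lam μ : ℝ)
    (hlam : 0 < lam)
    (H H₁ : Matrix (Fin d) (Fin d) ℝ) (hH : H.PosDef) (hH₁ : H₁.PosDef)
    (hlow : (H - lam • (1 : Matrix (Fin d) (Fin d) ℝ)).PosSemidef)
    (hclose : ‖Matrix.toEuclideanCLM (𝕜 := ℝ) (H₁ - H)‖ ≤ μ) :
    ∀ z ∈ spectrum ℂ
        (((H₁ + μ • (1 : Matrix (Fin d) (Fin d) ℝ))⁻¹ * H).map Complex.ofReal),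
      z.im = 0 ∧ 0 < z.re ∧ z.re ≤ 1 ∧ lam / (lam + 2 * μ) ≤ z.re := by
  intro z hz
  set P := H₁ + μ • (1 : Matrix (Fin d) (Fin d) ℝ)
  have hμ : 0 ≤ μ := (norm_nonneg _).trans hclose
  have hP : P.PosDef := hH₁.add_posSemidef (PosSemidef.one.smul hμ)
  have hsymm : (H₁ - H).IsHermitian := hH₁.isHermitian.sub hH.isHermitian
  have hHP : H ≤ P :=
    neg_le_sub_iff_le_add.mp (neg_smul_one_le_of_norm_toEuclideanCLM_le hsymm hclose)
  have hPH : lam • P ≤ (lam + 2 * μ) • H :=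
    calc lam • P = lam • H + lam • ((H₁ - H) + μ • 1) := by simp only [P]; module
      _ ≤ lam • H + lam • (μ • 1 + μ • 1) := by
        gcongr; exact le_smul_one_of_norm_toEuclideanCLM_le hsymm hclose
      _ = lam • H + (2 * μ) • (lam • 1) := by module
      _ ≤ lam • H + (2 * μ) • H := by gcongr; exact hlow
      _ = (lam + 2 * μ) • H := by module
  have hαP : (lam / (lam + 2 * μ)) • P ≤ H := by
    rwa [div_eq_inv_mul, mul_smul, inv_smul_le_iff_of_pos (by positivity)]
  obtain ⟨him, hαz, hz1⟩ :=
    im_eq_zero_and_mem_Icc_of_mem_spectrum_inv_mul hP hαP (by rwa [one_smul]) hz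
  have hαpos : 0 < lam / (lam + 2 * μ) := by positivity
  exact ⟨him, hαpos.trans_le hαz, hz1, hαz⟩

/-- If `H, H₁` are symmetric positive definite with `λI ⪯ H ⪯ LI`, `L ≥ λ > 0`,
`‖H₁ - H‖₂ ≤ μ` (spectral norm) with `μ > 0`, and `P = H₁ + μI`, then all
eigenvalues of `P⁻¹H` are real and positive, with largest eigenvalue at most 1
and smallest at least `λ/(λ + 2μ)`. -/
theorem preconditioned_eigenvalue_bounds {d : ℕ} (lam L μ : ℝ)
    (hlam : 0 < lam) (hL : lam ≤ L) (hμ : 0 < μ)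
    (H H₁ : Matrix (Fin d) (Fin d) ℝ) (hH : H.PosDef) (hH₁ : H₁.PosDef)
    (hlow : (H - lam • (1 : Matrix (Fin d) (Fin d) ℝ)).PosSemidef)
    (hup : ((L • (1 : Matrix (Fin d) (Fin d) ℝ)) - H).PosSemidef)
    (hclose : ‖Matrix.toEuclideanCLM (𝕜 := ℝ) (H₁ - H)‖ ≤ μ) :
    ∀ z ∈ spectrum ℂ
        (((H₁ + μ • (1 : Matrix (Fin d) (Fin d) ℝ))⁻¹ * H).map Complex.ofReal),
      z.im = 0 ∧ 0 < z.re ∧ z.re ≤ 1 ∧ lam / (lam + 2 * μ) ≤ z.re :=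
  preconditioned_eigenvalue_bounds_general lam μ hlam H H₁ hH hH₁ hlow hclose
end

section
/- Under the conditions λI ⪯ H ⪯ LI, ‖H₁ - H‖₂ ≤ μ, and P = H₁ + μI, the condition number of the preconditioned matrix satisfies κ(P^{-1}H) = σ_max(P^{-1}H)/σ_min(P^{-1}H) ≤ 1 + 2μ/λ. -/
/-!
From `λ I ⪯ H` and `|vᵀ (H₁ - H) v| ≤ μ ‖v‖²`, the quadratic forms of `H` and `P = H₁ + μ I`
satisfy `H ⪯ P ⪯ (1 + 2μ/λ) H`. An eigenvalue `c` of `P⁻¹ H` is a generalized eigenvalue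
`H v = c P v`, so `c = vᵀ H v / vᵀ P v` lies in `[(1 + 2μ/λ)⁻¹, 1]`, and the ratio of any two
such eigenvalues is at most `1 + 2μ/λ`.
-/

open Matrix

variable {n : Type*} [Fintype n] [DecidableEq n]

theorem abs_dotProduct_mulVec_le_of_norm_toEuclideanCLM_le {A : Matrix n n ℝ} {μ : ℝ}
    (h : ‖toEuclideanCLM (𝕜 := ℝ) A‖ ≤ μ) (v : n → ℝ) :
    |v ⬝ᵥ A *ᵥ v| ≤ μ * (v ⬝ᵥ v) := by
  set x : EuclideanSpace ℝ n := WithLp.toLp 2 v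
  have hnorm : v ⬝ᵥ v = ‖x‖ * ‖x‖ := by
    rw [← real_inner_self_eq_norm_mul_norm, EuclideanSpace.inner_eq_star_dotProduct]
    simp [x]
  rw [← inner_toEuclideanCLM A x x, hnorm]
  calc |inner ℝ x (toEuclideanCLM (𝕜 := ℝ) A x)| ≤ ‖x‖ * ‖toEuclideanCLM (𝕜 := ℝ) A x‖ :=
        abs_real_inner_le_norm _ _
    _ ≤ ‖x‖ * (μ * ‖x‖) := by
        gcongr
        exact (ContinuousLinearMap.le_opNorm _ x).trans (by gcongr)
    _ = μ * (‖x‖ * ‖x‖) := by ring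

theorem dotProduct_mulVec_add_smul_one_mem_Icc {H H₁ : Matrix n n ℝ} {μ : ℝ}
    (h : ‖toEuclideanCLM (𝕜 := ℝ) (H₁ - H)‖ ≤ μ) (v : n → ℝ) :
    v ⬝ᵥ (H₁ + μ • (1 : Matrix n n ℝ)) *ᵥ v ∈
      Set.Icc (v ⬝ᵥ H *ᵥ v) (v ⬝ᵥ H *ᵥ v + 2 * μ * (v ⬝ᵥ v)) := by
  have := abs_le.mp (abs_dotProduct_mulVec_le_of_norm_toEuclideanCLM_le h v)
  simp only [add_mulVec, sub_mulVec, smul_mulVec, one_mulVec, dotProduct_add,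
    dotProduct_sub, dotProduct_smul, smul_eq_mul] at this ⊢
  constructor <;> linarith

theorem Matrix.PosSemidef.mul_dotProduct_self_le {H : Matrix n n ℝ} {c : ℝ}
    (h : (H - c • (1 : Matrix n n ℝ)).PosSemidef) (v : n → ℝ) :
    c * (v ⬝ᵥ v) ≤ v ⬝ᵥ H *ᵥ v := by
  have := h.dotProduct_mulVec_nonneg v
  simp only [star_trivial, sub_mulVec, smul_mulVec, one_mulVec, dotProduct_sub,
    dotProduct_smul, smul_eq_mul] at this
  linarith

theorem Matrix.exists_mulVec_eq_smul_of_mem_spectrum {K : Type*} [Field K] {M : Matrix n n K}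
    {c : K} (hc : c ∈ spectrum K M) : ∃ v ≠ 0, M *ᵥ v = c • v := by
  rw [← Matrix.spectrum_toLin', ← Module.End.hasEigenvalue_iff_mem_spectrum] at hc
  obtain ⟨v, hv, hv0⟩ := hc.exists_hasEigenvector
  exact ⟨v, hv0, by simpa using Module.End.mem_eigenspace_iff.mp hv⟩

theorem Matrix.spectrum_inv_mul_subset_Icc {H P : Matrix n n ℝ} {C : ℝ}
    (hH : ∀ v ≠ 0, 0 < v ⬝ᵥ H *ᵥ v) (hHP : ∀ v, v ⬝ᵥ H *ᵥ v ≤ v ⬝ᵥ P *ᵥ v)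
    (hPH : ∀ v, v ⬝ᵥ P *ᵥ v ≤ C * (v ⬝ᵥ H *ᵥ v)) :
    spectrum ℝ (P⁻¹ * H) ⊆ Set.Icc C⁻¹ 1 := by
  have hP : IsUnit P.det := by
    refine isUnit_iff_ne_zero.mpr fun hdet => ?_
    obtain ⟨v, hv0, hPv⟩ := exists_mulVec_eq_zero_iff.mpr hdet
    simpa [hPv] using (hH v hv0).trans_le (hHP v)
  intro c hc
  obtain ⟨v, hv0, hv⟩ := exists_mulVec_eq_smul_of_mem_spectrum hc
  have hHv : H *ᵥ v = c • P *ᵥ v := by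
    rw [← mulVec_smul, ← hv, mulVec_mulVec, mul_nonsing_inv_cancel_left _ _ hP]
  have hq : 0 < v ⬝ᵥ H *ᵥ v := hH v hv0
  have hp : 0 < v ⬝ᵥ P *ᵥ v := hq.trans_le (hHP v)
  have hqp : v ⬝ᵥ H *ᵥ v = c * (v ⬝ᵥ P *ᵥ v) := by rw [hHv, dotProduct_smul, smul_eq_mul]
  have hC : 0 < C := pos_of_mul_pos_left (hp.trans_le (hPH v)) hq.le
  constructor
  · rw [inv_le_iff_one_le_mul₀' hC]
    have := hPH v
    rw [hqp] at this
    nlinarith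
  · have := hHP v
    rw [hqp] at this
    nlinarith

theorem preconditioned_condition_number_general {d : ℕ} (lam μ : ℝ)
    (hlam : 0 < lam) (hμ : 0 < μ)
    (H H₁ : Matrix (Fin d) (Fin d) ℝ)
    (hlow : (H - lam • (1 : Matrix (Fin d) (Fin d) ℝ)).PosSemidef)
    (hclose : ‖Matrix.toEuclideanCLM (𝕜 := ℝ) (H₁ - H)‖ ≤ μ) :
    ∀ a ∈ spectrum ℝ ((H₁ + μ • (1 : Matrix (Fin d) (Fin d) ℝ))⁻¹ * H),
      ∀ b ∈ spectrum ℝ ((H₁ + μ • (1 : Matrix (Fin d) (Fin d) ℝ))⁻¹ * H),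
        a / b ≤ 1 + 2 * μ / lam := by
  set P := H₁ + μ • (1 : Matrix (Fin d) (Fin d) ℝ)
  set C := 1 + 2 * μ / lam
  have hspec : spectrum ℝ (P⁻¹ * H) ⊆ Set.Icc C⁻¹ 1 := by
    refine spectrum_inv_mul_subset_Icc (fun v hv => ?_) (fun v => ?_) (fun v => ?_)
    · exact (mul_pos hlam (dotProduct_star_self_pos_iff.mpr hv)).trans_le
        (hlow.mul_dotProduct_self_le v)
    · exact (dotProduct_mulVec_add_smul_one_mem_Icc hclose v).1
    · have := mul_le_mul_of_nonneg_left (hlow.mul_dotProduct_self_le v)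
        (by positivity : 0 ≤ 2 * μ / lam)
      rw [← mul_assoc, div_mul_cancel₀ _ hlam.ne'] at this
      linarith [(dotProduct_mulVec_add_smul_one_mem_Icc hclose v).2]
  intro a ha b hb
  have hC : 0 < C := by positivity
  rw [div_le_iff₀ ((inv_pos.mpr hC).trans_le (hspec hb).1)]
  calc a ≤ 1 := (hspec ha).2
    _ ≤ C * b := (inv_le_iff_one_le_mul₀' hC).mp (hspec hb).1

/-- Under `λI ⪯ H ⪯ LI`, `‖H₁ - H‖₂ ≤ μ` and `P = H₁ + μI`, the condition
number of the preconditioned matrix satisfies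
`κ(P⁻¹H) = σ_max(P⁻¹H)/σ_min(P⁻¹H) ≤ 1 + 2μ/λ`; equivalently the ratio of any
two (real, positive) eigenvalues of `P⁻¹H` is at most `1 + 2μ/λ`. -/
theorem preconditioned_condition_number {d : ℕ} (lam L μ : ℝ)
    (hlam : 0 < lam) (hL : lam ≤ L) (hμ : 0 < μ)
    (H H₁ : Matrix (Fin d) (Fin d) ℝ) (hH : H.PosDef) (hH₁ : H₁.PosDef)
    (hlow : (H - lam • (1 : Matrix (Fin d) (Fin d) ℝ)).PosSemidef)
    (hup : ((L • (1 : Matrix (Fin d) (Fin d) ℝ)) - H).PosSemidef)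
    (hclose : ‖Matrix.toEuclideanCLM (𝕜 := ℝ) (H₁ - H)‖ ≤ μ) :
    ∀ a ∈ spectrum ℝ ((H₁ + μ • (1 : Matrix (Fin d) (Fin d) ℝ))⁻¹ * H),
      ∀ b ∈ spectrum ℝ ((H₁ + μ • (1 : Matrix (Fin d) (Fin d) ℝ))⁻¹ * H),
        a / b ≤ 1 + 2 * μ / lam :=
  preconditioned_condition_number_general lam μ hlam hμ H H₁ hlow hclose
end

section
/- Define ω(t) = t - log(1+t) for t ≥ 0 and ω_*(t) = -t - log(1-t) for 0 ≤ t < 1. Then ω_*(t) ≤ 2ω(t) for all t ∈ [0, 1/6]. -/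
/-!
Exponentiating, `ω_*(t) ≤ 2 ω(t)` becomes `(1 + t)² ≤ (1 - t) e^{3t}`. Bounding `e^{3t}` below by
its cubic Taylor polynomial, the difference of the two sides is at least `t² (1 - 9t²) / 2`, which
is nonnegative for `0 ≤ t ≤ 1/3`.
-/

open Real

theorem Real.cubic_le_exp_of_nonneg {x : ℝ} (hx : 0 ≤ x) :
    1 + x + x ^ 2 / 2 + x ^ 3 / 6 ≤ exp x :=
  calc
    1 + x + x ^ 2 / 2 + x ^ 3 / 6 = ∑ i ∈ Finset.range 4, x ^ i / i.factorial := by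
      simp only [Finset.sum_range_succ, Finset.range_zero, Finset.sum_empty, Nat.factorial]
      push_cast
      ring
    _ ≤ exp x := sum_le_exp_of_nonneg hx 4

theorem one_add_sq_le_one_sub_mul_exp {t : ℝ} (ht₀ : 0 ≤ t) (ht : t ≤ 1 / 3) :
    (1 + t) ^ 2 ≤ (1 - t) * exp (3 * t) :=
  calc
    (1 + t) ^ 2 ≤ (1 - t) * (1 + 3 * t + (3 * t) ^ 2 / 2 + (3 * t) ^ 3 / 6) := by
      nlinarith [mul_nonneg (sq_nonneg t) (by nlinarith : 0 ≤ 1 - 9 * t ^ 2)]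
    _ ≤ (1 - t) * exp (3 * t) :=
      mul_le_mul_of_nonneg_left (cubic_le_exp_of_nonneg (by linarith)) (by linarith)

theorem two_log_one_add_sub_log_one_sub_le {t : ℝ} (ht₀ : 0 ≤ t) (ht : t ≤ 1 / 3) :
    2 * log (1 + t) - log (1 - t) ≤ 3 * t := by
  have hlog := log_le_log (by positivity) (one_add_sq_le_one_sub_mul_exp ht₀ ht)
  rwa [log_pow, log_mul (by linarith) (exp_ne_zero _), log_exp, Nat.cast_ofNat,
    ← sub_le_iff_le_add'] at hlog

/-- ω_*(t) ≤ 2 ω(t) for t ∈ [0, 1/6], where ω(t) = t - log(1+t) and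
ω_*(t) = -t - log(1-t). -/
theorem omega_star_le_two_omega :
    ∀ t ∈ Set.Icc (0:ℝ) (1/6),
      (-t - Real.log (1 - t)) ≤ 2 * (t - Real.log (1 + t)) := by
  rintro t ⟨ht₀, ht⟩
  linarith [two_log_one_add_sub_log_one_sub_le ht₀ (by linarith)]
end

section
/- Define ω(t) = t - log(1+t) and ω_*(t) = -t - log(1-t). Then ω_*(t) - ω(t) ≤ 0.26·ω(t) for all t ∈ [0, 1/6]. -/
/-!
Replace both logarithms by Taylor polynomials about `0` with the remainder bound
`|x| ^ (n + 1) / (1 - |x|)` of `Real.abs_log_sub_add_sum_range_le`; for `t ≤ 1/6` the factor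
`1 / (1 - t)` is at most `6/5`, and the claim reduces to a polynomial inequality. The constant
`0.26` leaves little room (`ω_*(1/6) / ω(1/6) ≈ 1.251`), which is why the expansions go to
order six and seven.
-/

open Real Finset

theorem pow_div_one_sub_le {t : ℝ} (h0 : 0 ≤ t) (h1 : t ≤ 1 / 6) (k : ℕ) :
    t ^ k / (1 - t) ≤ 6 / 5 * t ^ k := by
  rw [div_le_iff₀ (by linarith)]
  nlinarith [pow_nonneg h0 k]

theorem neg_sub_log_one_sub_le {t : ℝ} (h0 : 0 ≤ t) (h1 : t ≤ 1 / 6) :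
    -t - log (1 - t) ≤ t ^ 2 / 2 + t ^ 3 / 3 + t ^ 4 / 4 + t ^ 5 / 5 + 6 / 5 * t ^ 6 := by
  have hx : |t| < 1 := by rw [abs_of_nonneg h0]; linarith
  have htaylor := (abs_le.mp (abs_log_sub_add_sum_range_le hx 5)).1
  rw [abs_of_nonneg h0] at htaylor
  simp only [sum_range_succ, sum_range_zero] at htaylor
  norm_num at htaylor
  linarith [pow_div_one_sub_le h0 h1 6]

theorem le_sub_log_one_add {t : ℝ} (h0 : 0 ≤ t) (h1 : t ≤ 1 / 6) :
    t ^ 2 / 2 - t ^ 3 / 3 + t ^ 4 / 4 - t ^ 5 / 5 + t ^ 6 / 6 - 6 / 5 * t ^ 7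
      ≤ t - log (1 + t) := by
  have hx : |-t| < 1 := by rw [abs_neg, abs_of_nonneg h0]; linarith
  have htaylor := (abs_le.mp (abs_log_sub_add_sum_range_le hx 6)).2
  rw [abs_neg, abs_of_nonneg h0, sub_neg_eq_add] at htaylor
  simp only [sum_range_succ, sum_range_zero] at htaylor
  norm_num at htaylor
  linarith [pow_div_one_sub_le h0 h1 7]

/-- ω_*(t) - ω(t) ≤ 0.26 ω(t) for t ∈ [0, 1/6]. -/
theorem omega_star_sub_omega_le :
    ∀ t ∈ Set.Icc (0:ℝ) (1/6),
      (-t - Real.log (1 - t)) - (t - Real.log (1 + t))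
        ≤ 0.26 * (t - Real.log (1 + t)) := by
  rintro t ⟨h0, h1⟩
  have hstar := neg_sub_log_one_sub_le h0 h1
  have hω := le_sub_log_one_add h0 h1
  have hpoly : t ^ 2 / 2 + t ^ 3 / 3 + t ^ 4 / 4 + t ^ 5 / 5 + 6 / 5 * t ^ 6
      ≤ 1.26 * (t ^ 2 / 2 - t ^ 3 / 3 + t ^ 4 / 4 - t ^ 5 / 5 + t ^ 6 / 6 - 6 / 5 * t ^ 7) := by
    nlinarith [mul_nonneg (pow_nonneg h0 2) (sub_nonneg.mpr h1),
      mul_nonneg (pow_nonneg h0 3) (sub_nonneg.mpr h1), pow_nonneg h0 5]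
  norm_num at hpoly ⊢
  linarith
end

section
/- The function h(t) = ω_*(t) - ω(t) = -2t - log(1-t) + log(1+t) satisfies h(t) ≤ (128/189)t³ for all t ∈ [0, 1/8], and ω(t) = t - log(1+t) satisfies ω(t) ≥ (4/9)t² for all t ∈ [0, 1/8]. Consequently ω_*(t) - ω(t) ≤ (√6 - 1/10)·ω(t)^{3/2} for t ∈ [0, 1/8]. -/
/-!
With `h(t) = ω_*(t) - ω(t)`, both bounds come from comparing derivatives on `[0, a]`:
`h'(t) = 2t²/(1 - t²) ≤ 2t²/(1 - a²)` and `ω'(t) = t/(1 + t) ≥ t/(1 + a)`, integrated from `0`,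
where `h` and `ω` vanish. For `a = 1/8` this gives `h(t) ≤ (128/189) t³` and `ω(t) ≥ ((2/3) t)²`,
so `ω(t)^{3/2} ≥ (8/27) t³`, and `(128/189) / (8/27) = 16/7 < 12/5 - 1/10 ≤ √6 - 1/10`.
-/

open Real Set

lemma le_of_hasDerivAt_le_of_le {f g f' g' : ℝ → ℝ} {a b : ℝ}
    (hf : ∀ x ∈ Icc a b, HasDerivAt f (f' x) x) (hg : ∀ x ∈ Icc a b, HasDerivAt g (g' x) x)
    (hle : ∀ x ∈ Ico a b, f' x ≤ g' x) (ha : f a ≤ g a) : ∀ x ∈ Icc a b, f x ≤ g x :=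
  image_le_of_deriv_right_le_deriv_boundary
    (fun x hx ↦ (hf x hx).continuousAt.continuousWithinAt)
    (fun x hx ↦ (hf x (Ico_subset_Icc_self hx)).hasDerivWithinAt) ha
    (fun x hx ↦ (hg x hx).continuousAt.continuousWithinAt)
    (fun x hx ↦ (hg x (Ico_subset_Icc_self hx)).hasDerivWithinAt) hle

lemma hasDerivAt_sub_log_one_add {x : ℝ} (hx : -1 < x) :
    HasDerivAt (fun t ↦ t - log (1 + t)) (x / (1 + x)) x := by
  have hlog := ((hasDerivAt_id' x).const_add 1).log (by linarith)
  refine ((hasDerivAt_id' x).sub hlog).congr_deriv ?_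
  field_simp [(by linarith : 1 + x ≠ 0)]
  ring

lemma hasDerivAt_log_one_add_sub_log_one_sub {x : ℝ} (hx₁ : -1 < x) (hx₂ : x < 1) :
    HasDerivAt (fun t ↦ -2 * t - log (1 - t) + log (1 + t)) (2 * x ^ 2 / (1 - x ^ 2)) x := by
  have hplus := ((hasDerivAt_id' x).const_add 1).log (by linarith)
  have hminus := ((hasDerivAt_id' x).const_sub 1).log (by linarith)
  refine ((((hasDerivAt_id' x).const_mul (-2)).sub hminus).add hplus).congr_deriv ?_
  have : 1 - x ^ 2 ≠ 0 := by nlinarith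
  field_simp [sub_ne_zero.mpr hx₂.ne', (by linarith : 1 + x ≠ 0)]
  ring

lemma log_one_add_sub_log_one_sub_le {a t : ℝ} (ha : a < 1) (ht : t ∈ Icc 0 a) :
    -2 * t - log (1 - t) + log (1 + t) ≤ 2 / (3 * (1 - a ^ 2)) * t ^ 3 := by
  have ha₀ : 0 ≤ a := ht.1.trans ht.2
  have hpos : 0 < 1 - a ^ 2 := by nlinarith
  refine le_of_hasDerivAt_le_of_le (g := fun x ↦ 2 / (3 * (1 - a ^ 2)) * x ^ 3)
    (g' := fun x ↦ 2 * x ^ 2 / (1 - a ^ 2))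
    (fun x hx ↦ hasDerivAt_log_one_add_sub_log_one_sub (by linarith [hx.1]) (by linarith [hx.2]))
    (fun x _ ↦ ?_) (fun x hx ↦ ?_) (by simp) t ht
  · refine ((hasDerivAt_pow 3 x).const_mul _).congr_deriv ?_
    field_simp
    ring
  · have : x ^ 2 ≤ a ^ 2 := pow_le_pow_left₀ hx.1 hx.2.le 2
    exact div_le_div_of_nonneg_left (by positivity) hpos (by linarith)

lemma sq_div_le_sub_log_one_add {a t : ℝ} (ht : t ∈ Icc 0 a) :
    t ^ 2 / (2 * (1 + a)) ≤ t - log (1 + t) := by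
  refine le_of_hasDerivAt_le_of_le (f := fun x ↦ x ^ 2 / (2 * (1 + a)))
    (f' := fun x ↦ x / (1 + a)) (fun x _ ↦ ?_)
    (fun x hx ↦ hasDerivAt_sub_log_one_add (by linarith [hx.1])) (fun x hx ↦ ?_) (by simp) t ht
  · refine ((hasDerivAt_pow 2 x).div_const _).congr_deriv ?_
    field_simp
    ring
  · exact div_le_div_of_nonneg_left hx.1 (by linarith [hx.1]) (by linarith [hx.2])

lemma sq_rpow_three_halves {x : ℝ} (hx : 0 ≤ x) : (x ^ 2) ^ ((3 : ℝ) / 2) = x ^ 3 := by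
  rw [← rpow_natCast x 2, ← rpow_mul hx]
  norm_num

/-- On [0, 1/8]: h(t) = ω_*(t) - ω(t) ≤ (128/189) t³, ω(t) ≥ (4/9) t², and
consequently ω_*(t) - ω(t) ≤ (√6 - 1/10) ω(t)^{3/2}. -/
theorem omega_star_sub_omega_bounds :
    ∀ t ∈ Set.Icc (0:ℝ) (1/8),
      (-2 * t - Real.log (1 - t) + Real.log (1 + t)) ≤ (128/189) * t ^ 3 ∧
      (4/9) * t ^ 2 ≤ (t - Real.log (1 + t)) ∧
      (-t - Real.log (1 - t)) - (t - Real.log (1 + t))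
        ≤ (Real.sqrt 6 - 1/10) * (t - Real.log (1 + t)) ^ ((3:ℝ)/2) := by
  intro t ht
  have hh : -2 * t - log (1 - t) + log (1 + t) ≤ 128 / 189 * t ^ 3 := by
    convert log_one_add_sub_log_one_sub_le (by norm_num) ht using 2
    norm_num
  have hω : (2 / 3 * t) ^ 2 ≤ t - log (1 + t) := by
    convert sq_div_le_sub_log_one_add ht using 1
    ring
  have hsqrt6 : 12 / 5 ≤ √6 := (le_sqrt (by norm_num) (by norm_num)).2 (by norm_num)
  refine ⟨hh, by linarith, ?_⟩
  calc -t - log (1 - t) - (t - log (1 + t)) = -2 * t - log (1 - t) + log (1 + t) := by ring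
    _ ≤ 128 / 189 * t ^ 3 := hh
    _ ≤ (√6 - 1 / 10) * ((2 / 3 * t) ^ 2) ^ ((3 : ℝ) / 2) := by
      rw [sq_rpow_three_halves (by linarith [ht.1])]
      nlinarith [pow_nonneg ht.1 3]
    _ ≤ (√6 - 1 / 10) * (t - log (1 + t)) ^ ((3 : ℝ) / 2) := by
      gcongr
      linarith
end

section
/- Let r: ℝ^d → ℝ be ρ-strongly convex with minimizer ŵ = argmin r, and let r^{(k)}: ℝ^d → ℝ be ρ-strongly convex with minimizer ŵ^{(k)}. Suppose r(w) - r^{(k)}(w) = (1/n)(φ(w, z) - φ(w, z̃)) for all w, where for all points u in a set containing ŵ and ŵ^{(k)} the functions w ↦ φ(w,z) and w ↦ φ(w,z̃) are G-Lipschitz. Then ‖ŵ^{(k)} - ŵ‖₂ ≤ 2G/(ρn), and |φ(ŵ^{(k)}, z') - φ(ŵ, z')| ≤ 2G²/(ρn) for any z' such that φ(·, z') is G-Lipschitz. -/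
/-!
At a minimizer `x` of an `m`-strongly convex `f`, `f x + m / 2 * ‖y - x‖ ^ 2 ≤ f y`: this is the
strong convexity inequality on the segment `[x, y]` in the limit where the point tends to `x`.
Adding this for `r` at `ŵ` and for `r⁽ᵏ⁾` at `ŵ⁽ᵏ⁾` bounds `ρ ‖ŵ⁽ᵏ⁾ - ŵ‖ ^ 2` by the increment of
`r - r⁽ᵏ⁾ = (φ(·, z) - φ(·, z̃)) / n` between the two minimizers, which is at most
`2G / n * ‖ŵ⁽ᵏ⁾ - ŵ‖`. The bound on the loss then comes from the Lipschitz property of `φ(·, z')`.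
-/

open Filter Topology

section

variable {E : Type*} [NormedAddCommGroup E] [NormedSpace ℝ E] {s : Set E} {f g : E → ℝ} {x y : E}

lemma UniformConvexOn.add_le_of_isMinOn {φ : ℝ → ℝ} (hf : UniformConvexOn s φ f)
    (hx : IsMinOn f s x) (hxs : x ∈ s) (hys : y ∈ s) : f x + φ ‖y - x‖ ≤ f y := by
  have hsegment : ∀ t ∈ Set.Ioc (0 : ℝ) 1, (1 - t) * φ ‖y - x‖ ≤ f y - f x := by
    rintro t ⟨ht0, ht1⟩
    have hconv := hf.2 hys hxs ht0.le (sub_nonneg.2 ht1) (add_sub_cancel t 1)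
    have hmin : f x ≤ f (t • y + (1 - t) • x) :=
      hx (hf.1 hys hxs ht0.le (sub_nonneg.2 ht1) (add_sub_cancel t 1))
    rw [smul_eq_mul, smul_eq_mul] at hconv
    refine le_of_mul_le_mul_left ?_ ht0
    nlinarith
  have hlim : Tendsto (fun t : ℝ ↦ (1 - t) * φ ‖y - x‖) (𝓝[>] 0) (𝓝 (φ ‖y - x‖)) := by
    have : Continuous (fun t : ℝ ↦ (1 - t) * φ ‖y - x‖) := by fun_prop
    simpa using this.continuousWithinAt (s := Set.Ioi 0) (x := 0) |>.tendsto
  have hgap : φ ‖y - x‖ ≤ f y - f x :=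
    le_of_tendsto hlim (by filter_upwards [Ioc_mem_nhdsGT one_pos] using hsegment)
  linarith

lemma StrongConvexOn.add_le_of_isMinOn {m : ℝ} (hf : StrongConvexOn s m f)
    (hx : IsMinOn f s x) (hxs : x ∈ s) (hys : y ∈ s) : f x + m / 2 * ‖y - x‖ ^ 2 ≤ f y :=
  UniformConvexOn.add_le_of_isMinOn hf hx hxs hys

lemma StrongConvexOn.mul_sq_norm_sub_le_of_isMinOn {m : ℝ} (hf : StrongConvexOn s m f)
    (hg : StrongConvexOn s m g) (hx : IsMinOn f s x) (hy : IsMinOn g s y) (hxs : x ∈ s)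
    (hys : y ∈ s) : m * ‖x - y‖ ^ 2 ≤ (f y - g y) - (f x - g x) := by
  have hfx := hf.add_le_of_isMinOn hx hxs hys
  have hgy := hg.add_le_of_isMinOn hy hys hxs
  rw [norm_sub_rev] at hfx
  linarith

lemma le_div_of_mul_sq_le_mul {m K D : ℝ} (hm : 0 < m) (hK : 0 ≤ K) (hD : 0 ≤ D)
    (h : m * D ^ 2 ≤ K * D) : D ≤ K / m := by
  rw [le_div_iff₀ hm]
  rcases hD.eq_or_lt with rfl | hD
  · simpa using hK
  · exact le_of_mul_le_mul_right (by linarith) hD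

lemma StrongConvexOn.norm_sub_le_of_isMinOn_of_lipschitzOnWith {m : ℝ} {K : NNReal} {t : Set E}
    (hm : 0 < m) (hf : StrongConvexOn s m f) (hg : StrongConvexOn s m g) (hx : IsMinOn f s x)
    (hy : IsMinOn g s y) (hxs : x ∈ s) (hys : y ∈ s)
    (hfg : LipschitzOnWith K (f - g) t) (hxt : x ∈ t) (hyt : y ∈ t) :
    ‖x - y‖ ≤ K / m := by
  refine le_div_of_mul_sq_le_mul hm K.2 (norm_nonneg _) ?_
  calc m * ‖x - y‖ ^ 2 ≤ (f - g) y - (f - g) x :=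
        hf.mul_sq_norm_sub_le_of_isMinOn hg hx hy hxs hys
    _ ≤ K * ‖x - y‖ := by
      have hincr := hfg.le_add_mul hyt hxt
      rw [dist_eq_norm, norm_sub_rev] at hincr
      linarith

end

theorem erm_stability_general {d : ℕ} (ρ G : ℝ) (hρ : 0 < ρ) (hG : 0 ≤ G) (n : ℕ)
    (r rk : EuclideanSpace ℝ (Fin d) → ℝ)
    (hr : StrongConvexOn Set.univ ρ r) (hrk : StrongConvexOn Set.univ ρ rk)
    (wh whk : EuclideanSpace ℝ (Fin d))
    (hwh : IsMinOn r Set.univ wh) (hwhk : IsMinOn rk Set.univ whk)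
    (φz φzt : EuclideanSpace ℝ (Fin d) → ℝ)
    (hdiff : ∀ w, r w - rk w = (1 / (n:ℝ)) * (φz w - φzt w))
    (S : Set (EuclideanSpace ℝ (Fin d))) (hwhS : wh ∈ S) (hwhkS : whk ∈ S)
    (hφz : LipschitzOnWith (Real.toNNReal G) φz S)
    (hφzt : LipschitzOnWith (Real.toNNReal G) φzt S) :
    ‖whk - wh‖ ≤ 2 * G / (ρ * n) ∧
    ∀ φ' : EuclideanSpace ℝ (Fin d) → ℝ,
      LipschitzOnWith (Real.toNNReal G) φ' S →
        |φ' whk - φ' wh| ≤ 2 * G ^ 2 / (ρ * n) := by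
  have hlip : LipschitzOnWith (‖1 / (n : ℝ)‖₊ * (G.toNNReal + G.toNNReal)) (r - rk) S := by
    rw [show r - rk = fun w ↦ (1 / (n : ℝ)) • (φz w - φzt w) from funext hdiff]
    exact (lipschitzWith_smul _).comp_lipschitzOnWith (hφz.sub hφzt)
  have hD : ‖whk - wh‖ ≤ 2 * G / (ρ * n) := by
    have := hr.norm_sub_le_of_isMinOn_of_lipschitzOnWith hρ hrk hwh hwhk trivial trivial hlip
      hwhS hwhkS
    rw [norm_sub_rev]
    convert this using 1
    push_cast
    rw [Real.coe_toNNReal _ hG, Real.norm_eq_abs, abs_of_nonneg (by positivity)]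
    ring
  refine ⟨hD, fun φ' hφ' ↦ ?_⟩
  calc |φ' whk - φ' wh| ≤ G * ‖whk - wh‖ := by
        simpa [Real.dist_eq, dist_eq_norm, Real.coe_toNNReal _ hG] using
          hφ'.dist_le_mul whk hwhkS wh hwhS
    _ ≤ G * (2 * G / (ρ * n)) := by gcongr
    _ = 2 * G ^ 2 / (ρ * n) := by ring

/-- Stability of regularized ERM: if `r` and `r^{(k)}` are `ρ`-strongly convex
with respective minimizers `wh` and `whᵏ`, their difference is
`(1/n)(φ(·,z) - φ(·,z̃))`, and the loss functions are `G`-Lipschitz on a set `S`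
containing both minimizers, then `‖whᵏ - wh‖ ≤ 2G/(ρn)`, and
`|φ(whᵏ, z') - φ(wh, z')| ≤ 2G²/(ρn)` for any loss `φ(·, z')` that is
`G`-Lipschitz on `S`. -/
theorem erm_stability {d : ℕ} (ρ G : ℝ) (hρ : 0 < ρ) (hG : 0 ≤ G) (n : ℕ) (hn : 0 < n)
    (r rk : EuclideanSpace ℝ (Fin d) → ℝ)
    (hr : StrongConvexOn Set.univ ρ r) (hrk : StrongConvexOn Set.univ ρ rk)
    (wh whk : EuclideanSpace ℝ (Fin d))
    (hwh : IsMinOn r Set.univ wh) (hwhk : IsMinOn rk Set.univ whk)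
    (φz φzt : EuclideanSpace ℝ (Fin d) → ℝ)
    (hdiff : ∀ w, r w - rk w = (1 / (n:ℝ)) * (φz w - φzt w))
    (S : Set (EuclideanSpace ℝ (Fin d))) (hwhS : wh ∈ S) (hwhkS : whk ∈ S)
    (hφz : LipschitzOnWith (Real.toNNReal G) φz S)
    (hφzt : LipschitzOnWith (Real.toNNReal G) φzt S) :
    ‖whk - wh‖ ≤ 2 * G / (ρ * n) ∧
    ∀ φ' : EuclideanSpace ℝ (Fin d) → ℝ,
      LipschitzOnWith (Real.toNNReal G) φ' S →
        |φ' whk - φ' wh| ≤ 2 * G ^ 2 / (ρ * n) :=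
  erm_stability_general ρ G hρ hG n r rk hr hrk wh whk hwh hwhk φz φzt hdiff S hwhS hwhkS hφz hφzt
end
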